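/- arXiv:2002.08798 — 5 statements merged into one kernel-verified Lean document; each statement's English description precedes it below -/
import Mathlib

section
/- The pmf P_Δ(x) = λμ((1−λ)^{x−1} − (1−μ)^{x−1})/(μ−λ) on {1,2,...} (λ ≠ μ in (0,1)) has second moment ∑_{x≥1} x²·P_Δ(x) = (λ²(2−μ) + λμ(2−μ) + 2μ²)/(λ²μ²). -/
/-!
Writing `(n + 1)² = 2·C(n + 2, 2) − C(n + 1, 1)`, the negative binomial series
`∑ C(n + k, k) rⁿ = (1 − r)^{-(k+1)}` gives `∑ (n + 1)² rⁿ = (1 + r)/(1 − r)³`. After the shift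
`x = n + 1`, the second moment of `P_Δ` is `λμ/(μ − λ)` times the difference of two such series,
at `r = 1 − λ` and `r = 1 − μ`.
-/

theorem hasSum_add_one_sq_mul_geometric {𝕜 : Type*} [NormedField 𝕜]
    {r : 𝕜} (hr : ‖r‖ < 1) :
    HasSum (fun n : ℕ ↦ ((n : 𝕜) + 1) ^ 2 * r ^ n) ((1 + r) / (1 - r) ^ 3) := by
  have hr1 : 1 - r ≠ 0 := by
    rintro h
    simp [← sub_eq_zero.mp h] at hr
  have hsq (n : ℕ) : ((n : 𝕜) + 1) ^ 2 * r ^ n =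
      2 * (((n + 2).choose 2 : ℕ) * r ^ n) - ((n + 1).choose 1 : ℕ) * r ^ n := by
    have hc : (((n + 2).choose 2 * 2 : ℕ) : 𝕜) = ((n + 2) * (n + 1) : ℕ) := by
      rw [← Nat.add_one_mul_choose_eq, Nat.choose_one_right]
    rw [Nat.choose_one_right]
    push_cast at hc ⊢
    linear_combination -(r ^ n) * hc
  have hsum : (1 + r) / (1 - r) ^ 3 = 2 * (1 / (1 - r) ^ (2 + 1)) - 1 / (1 - r) ^ (1 + 1) := by
    field_simp
    ring
  simp_rw [hsq, hsum]
  exact ((hasSum_choose_mul_geometric_of_norm_lt_one 2 hr).mul_left 2).sub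
    (hasSum_choose_mul_geometric_of_norm_lt_one 1 hr)

theorem hasSum_add_one_sq_mul_one_sub_pow {p : ℝ} (hp0 : 0 < p) (hp2 : p < 2) :
    HasSum (fun n : ℕ ↦ ((n : ℝ) + 1) ^ 2 * (1 - p) ^ n) ((2 - p) / p ^ 3) := by
  have hr : ‖1 - p‖ < 1 := by rw [Real.norm_eq_abs, abs_lt]; constructor <;> linarith
  have h := hasSum_add_one_sq_mul_geometric hr
  rwa [sub_sub_cancel, ← add_sub_assoc, one_add_one_eq_two] at h

/-- The pmf `P_Δ(x) = λμ((1−λ)^{x−1} − (1−μ)^{x−1})/(μ−λ)` on `{1,2,...}` has second moment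
`(λ²(2−μ) + λμ(2−μ) + 2μ²)/(λ²μ²)`. -/
theorem lcfs_aoi_second_moment (l m : ℝ) (hl0 : 0 < l) (hl1 : l < 1) (hm0 : 0 < m)
    (hm1 : m < 1) (hne : l ≠ m) :
    (∑' x : ℕ, (x : ℝ) ^ 2 * (if x = 0 then (0 : ℝ)
      else l * m * ((1 - l) ^ (x - 1) - (1 - m) ^ (x - 1)) / (m - l))) =
    (l ^ 2 * (2 - m) + l * m * (2 - m) + 2 * m ^ 2) / (l ^ 2 * m ^ 2) := by
  set P : ℕ → ℝ := fun x ↦ (x : ℝ) ^ 2 * (if x = 0 then (0 : ℝ)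
      else l * m * ((1 - l) ^ (x - 1) - (1 - m) ^ (x - 1)) / (m - l))
  have hP_succ : (fun n ↦ P (n + 1)) = fun n : ℕ ↦
      l * m / (m - l) * (((n : ℝ) + 1) ^ 2 * (1 - l) ^ n - ((n : ℝ) + 1) ^ 2 * (1 - m) ^ n) := by
    funext n
    simp only [P, Nat.add_sub_cancel, Nat.add_one_ne_zero, if_false, Nat.cast_add_one]
    ring
  have hsucc : HasSum (fun n ↦ P (n + 1))
      (l * m / (m - l) * ((2 - l) / l ^ 3 - (2 - m) / m ^ 3)) := by
    rw [hP_succ]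
    exact ((hasSum_add_one_sq_mul_one_sub_pow hl0 (by linarith)).sub
      (hasSum_add_one_sq_mul_one_sub_pow hm0 (by linarith))).mul_left _
  have hP : HasSum P _ := (hasSum_nat_add_iff' 1).mp (by simpa [P] using hsucc)
  have hml : m - l ≠ 0 := sub_ne_zero.mpr hne.symm
  rw [hP.tsum_eq]
  field_simp
  ring
end

section
/- For 0 < λ < μ < 1 and ρ = (1−μ)/(1−λ), the sum ∑_{x=1}^∞ x · [ ((μ−λ)/(1−μ))·ρ^{x−1} + λμ(1−x)(1−μ)^{x−2} + λμ(1−λ)^{x−1}/(μ−λ) + (λ² − λμ(μ+1) + μ²)(1−μ)^{x−2}/(λ−μ) ] equals 1/λ + (1−λ)/(μ−λ) − λ/μ² + λ/μ. -/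
/-! Writing `x = n + 1`, the summand `x · P_Δ(x)` is a linear combination of `(n + 1) qⁿ` and
`(n + 1)(n + 2) qⁿ` for `q ∈ {ρ, 1 - λ, 1 - μ}`, whose sums are `1 / (1 - q)²` and
`2 / (1 - q)³`; what remains is an identity of rational functions in `λ` and `μ`. -/

section Geometric

variable {𝕜 : Type*} [NormedField 𝕜] {q : 𝕜}

theorem hasSum_add_one_mul_geometric (hq : ‖q‖ < 1) :
    HasSum (fun n : ℕ ↦ ((n : 𝕜) + 1) * q ^ n) (1 / (1 - q) ^ 2) := by
  convert hasSum_choose_mul_geometric_of_norm_lt_one 1 hq using 2 with n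
  simp

theorem hasSum_add_one_mul_add_two_mul_geometric (hq : ‖q‖ < 1) :
    HasSum (fun n : ℕ ↦ ((n : 𝕜) + 1) * ((n : 𝕜) + 2) * q ^ n) (2 / (1 - q) ^ 3) := by
  have h := (hasSum_choose_mul_geometric_of_norm_lt_one 2 hq).mul_left 2
  rw [mul_one_div] at h
  convert! h using 2 with n
  have hchoose : (n + 2) * (n + 1) = (n + 2).choose 2 * 2 := by
    simpa using Nat.add_one_mul_choose_eq (n + 1) 1
  rw [← mul_assoc, mul_comm 2, ← Nat.cast_ofNat, ← Nat.cast_mul, ← hchoose]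
  push_cast
  ring

end Geometric

/-- `P_Δ(x)` of Eq. (18) with `λ, μ, ρ` written `l, m, r`. -/
noncomputable def fcfsAoIPmf (l m r : ℝ) (x : ℕ) : ℝ :=
  (m - l) / (1 - m) * r ^ ((x : ℤ) - 1)
    + l * m * (1 - (x : ℝ)) * (1 - m) ^ ((x : ℤ) - 2)
    + l * m * (1 - l) ^ ((x : ℤ) - 1) / (m - l)
    + (l ^ 2 - l * m * (m + 1) + m ^ 2) * (1 - m) ^ ((x : ℤ) - 2) / (l - m)

theorem fcfsAoIPmf_succ {l m : ℝ} (r : ℝ) (hm : m ≠ 1) (n : ℕ) :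
    fcfsAoIPmf l m r (n + 1) = (m - l) / (1 - m) * r ^ n + l * m / (m - l) * (1 - l) ^ n
      + ((l ^ 2 - l * m * (m + 1) + m ^ 2) / (l - m) - l * m * n) / (1 - m) * (1 - m) ^ n := by
  have h1m : 1 - m ≠ 0 := sub_ne_zero.mpr hm.symm
  have hpred : ∀ q : ℝ, q ^ (((n + 1 : ℕ) : ℤ) - 1) = q ^ n := fun q ↦ by simp
  have hpred2 : (1 - m) ^ (((n + 1 : ℕ) : ℤ) - 2) = (1 - m) ^ n / (1 - m) := by
    rw [show ((n + 1 : ℕ) : ℤ) - 2 = n - 1 by push_cast; ring, zpow_sub_one₀ h1m, zpow_natCast,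
      div_eq_mul_inv]
  rw [fcfsAoIPmf, hpred, hpred, hpred2]
  push_cast
  ring

theorem hasSum_add_one_mul_fcfsAoIPmf_succ {l m r : ℝ} (hl0 : 0 < l) (hlm : l < m) (hm1 : m < 1)
    (hr : r = (1 - m) / (1 - l)) :
    HasSum (fun n : ℕ ↦ ((n : ℝ) + 1) * fcfsAoIPmf l m r (n + 1))
      (1 / l + (1 - l) / (m - l) - l / m ^ 2 + l / m) := by
  have hr_norm : ‖r‖ < 1 := by
    rw [hr, Real.norm_eq_abs, abs_lt, lt_div_iff₀ (by linarith), div_lt_one (by linarith)]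
    constructor <;> linarith
  have hl_norm : ‖1 - l‖ < 1 := by rw [Real.norm_eq_abs, abs_lt]; constructor <;> linarith
  have hm_norm : ‖1 - m‖ < 1 := by rw [Real.norm_eq_abs, abs_lt]; constructor <;> linarith
  -- `-l m n = 2 l m - l m (n + 2)` splits the `(1 - m)ⁿ` part into the two series
  have h := ((((hasSum_add_one_mul_geometric hr_norm).mul_left ((m - l) / (1 - m))).add
    ((hasSum_add_one_mul_geometric hl_norm).mul_left (l * m / (m - l)))).add
    ((hasSum_add_one_mul_geometric hm_norm).mul_left
      (((l ^ 2 - l * m * (m + 1) + m ^ 2) / (l - m) + 2 * l * m) / (1 - m)))).sub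
    ((hasSum_add_one_mul_add_two_mul_geometric hm_norm).mul_left (l * m / (1 - m)))
  convert! h using 1
  · ext n
    rw [fcfsAoIPmf_succ r (by linarith)]
    ring
  · have hml : m - l ≠ 0 := by linarith
    have hlm' : l - m ≠ 0 := by linarith
    have h1m : 1 - m ≠ 0 := by linarith
    have h1l : 1 - l ≠ 0 := by linarith
    have hm0 : m ≠ 0 := by linarith
    have h1r : 1 - r = (m - l) / (1 - l) := by rw [hr]; field_simp; ring
    rw [h1r, sub_sub_cancel, sub_sub_cancel]
    field_simp
    ring

theorem hasSum_mul_fcfsAoIPmf {l m r : ℝ} (hl0 : 0 < l) (hlm : l < m) (hm1 : m < 1)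
    (hr : r = (1 - m) / (1 - l)) :
    HasSum (fun x : ℕ ↦ if x = 0 then 0 else (x : ℝ) * fcfsAoIPmf l m r x)
      (1 / l + (1 - l) / (m - l) - l / m ^ 2 + l / m) := by
  rw [← hasSum_nat_add_iff' 1]
  simpa using hasSum_add_one_mul_fcfsAoIPmf_succ hl0 hlm hm1 hr

/-- For `0 < λ < μ < 1` and `ρ = (1−μ)/(1−λ)`, the mean of the stationary AoI pmf of the
FCFS Geo/Geo/1 queue equals `1/λ + (1−λ)/(μ−λ) − λ/μ² + λ/μ`. -/
theorem fcfs_aoi_mean (l m : ℝ) (hl0 : 0 < l) (hlm : l < m) (hm1 : m < 1)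
    (r : ℝ) (hr : r = (1 - m) / (1 - l)) :
    (∑' x : ℕ, (if x = 0 then (0 : ℝ) else (x : ℝ) *
      ((m - l) / (1 - m) * r ^ ((x : ℤ) - 1)
        + l * m * (1 - (x : ℝ)) * (1 - m) ^ ((x : ℤ) - 2)
        + l * m * (1 - l) ^ ((x : ℤ) - 1) / (m - l)
        + (l ^ 2 - l * m * (m + 1) + m ^ 2) * (1 - m) ^ ((x : ℤ) - 2) / (l - m))))
    = 1 / l + (1 - l) / (m - l) - l / m ^ 2 + l / m :=
  (hasSum_mul_fcfsAoIPmf hl0 hlm hm1 hr).tsum_eq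
end

section
/- For μ ∈ (0,1), the mean PAoI C_peak(λ) = (μ − λ²)/(λ(μ − λ)) on λ ∈ (0, μ) is uniquely minimized at λ* = 1 − √(1−μ), and at this point the first-order condition μ((λ−2)λ + μ) = 0 holds. -/
/-- For `μ ∈ (0,1)`, the mean PAoI `C_peak(λ) = (μ − λ²)/(λ(μ − λ))` on `λ ∈ (0, μ)` is
uniquely minimized at `λ* = 1 − √(1−μ)`, where the first-order condition
`μ((λ*−2)λ* + μ) = 0` holds. -/
theorem fcfs_paoi_optimal_arrival (m : ℝ) (hm0 : 0 < m) (hm1 : m < 1)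
    (C : ℝ → ℝ) (hC : ∀ l, C l = (m - l ^ 2) / (l * (m - l)))
    (lstar : ℝ) (hlstar : lstar = 1 - Real.sqrt (1 - m)) :
    0 < lstar ∧ lstar < m ∧
    (∀ l, 0 < l → l < m → C lstar ≤ C l) ∧
    (∀ l, 0 < l → l < m → C l = C lstar → l = lstar) ∧
    m * ((lstar - 2) * lstar + m) = 0 := by
  set s := Real.sqrt (1 - m) with hs
  have hs2 : s ^ 2 = 1 - m := Real.sq_sqrt (by linarith)
  have hs0 : 0 < s := Real.sqrt_pos.mpr (by linarith)
  have hs1 : s < 1 := by nlinarith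
  have hL0 : 0 < lstar := by rw [hlstar]; linarith
  have hLm : lstar < m := by rw [hlstar]; nlinarith
  have hkey : lstar ^ 2 - 2 * lstar + m = 0 := by rw [hlstar]; nlinarith
  have hdenL : 0 < lstar * (m - lstar) := mul_pos hL0 (by linarith)
  have hid : ∀ l : ℝ, (m - l ^ 2) * (lstar * (m - lstar)) - (m - lstar ^ 2) * (l * (m - l))
      = (m - lstar) * (2 - lstar) * (l - lstar) ^ 2 := by
    intro l
    linear_combination ((lstar - l) * m - (l - lstar) ^ 2) * hkey
  refine ⟨hL0, hLm, ?_, ?_, by nlinarith⟩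
  · intro l hl hlm
    have hden : 0 < l * (m - l) := mul_pos hl (by linarith)
    rw [hC, hC, div_le_div_iff₀ hdenL hden]
    nlinarith [hid l, mul_nonneg (mul_nonneg (by linarith : (0:ℝ) ≤ m - lstar)
      (by linarith : (0:ℝ) ≤ 2 - lstar)) (sq_nonneg (l - lstar))]
  · intro l hl hlm heq
    have hden : 0 < l * (m - l) := mul_pos hl (by linarith)
    rw [hC, hC, div_eq_div_iff (ne_of_gt hden) (ne_of_gt hdenL)] at heq
    have hz : (m - lstar) * (2 - lstar) * (l - lstar) ^ 2 = 0 := by linarith [hid l]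
    have h1 : (0:ℝ) < (m - lstar) * (2 - lstar) := by nlinarith
    have : (l - lstar) ^ 2 = 0 := by
      rcases mul_eq_zero.mp hz with h | h
      · exact absurd h (ne_of_gt h1)
      · exact h
    nlinarith [this]
end

section
/- For λ, μ ∈ (0,1), λ ≠ μ, and for every integer x ≥ 1, the pmf P_A(x) = ((λ(1−μ)+μ)/(λ−μ)) · [ (λ−μ)((1−λ)(1−μ))^{x−1} − λ(1−λ)^{x−1} + μ(1−μ)^{x−1} ] is nonnegative and sums to 1 over x ∈ {1,2,...}. -/
/-!
The bracket of `P_A` is a combination of three geometric sequences, with ratios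
`(1 - λ)(1 - μ)`, `1 - λ` and `1 - μ`, so the total mass is a geometric-series computation.
For nonnegativity put `a = 1 - λ`, `b = 1 - μ`; the geometric sums for `bⁿ - aⁿ` and `bⁿ - 1` give
`(λ - μ) · bracket(n) = μ (λ - μ)² ∑_{i<n} bⁱ (a^(n-1-i) - aⁿ) ≥ 0`,
so the bracket has the sign of `λ - μ`, and so does the prefactor `(λ(1 - μ) + μ) / (λ - μ)`.
-/

open Finset

theorem hasSum_ite_zero_pred {G : Type*} [AddCommGroup G] [TopologicalSpace G]
    [IsTopologicalAddGroup G] {f : ℕ → G} {a : G} (hf : HasSum f a) :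
    HasSum (fun x => if x = 0 then 0 else f (x - 1)) a := by
  rw [← hasSum_nat_add_iff' 1]
  simpa using hf

namespace PAoI

def bracket (l m : ℝ) (n : ℕ) : ℝ :=
  (l - m) * ((1 - l) * (1 - m)) ^ n - l * (1 - l) ^ n + m * (1 - m) ^ n

/-- `pmf l m n` is `P_A(n + 1)`. -/
noncomputable def pmf (l m : ℝ) (n : ℕ) : ℝ :=
  (l * (1 - m) + m) / (l - m) * bracket l m n

variable {l m : ℝ}

theorem sub_mul_bracket_nonneg (hl0 : 0 ≤ l) (hl1 : l ≤ 1) (hm0 : 0 ≤ m) (hm1 : m ≤ 1)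
    (n : ℕ) : 0 ≤ (l - m) * bracket l m n := by
  set a := 1 - l
  set b := 1 - m
  have key : (l - m) * bracket l m n
      = m * (l - m) ^ 2 * ∑ i ∈ range n, b ^ i * (a ^ (n - 1 - i) - a ^ n) := by
    simp only [bracket, mul_sub, sum_sub_distrib, ← sum_mul]
    linear_combination (l - m) * ((b - 1) * geom_sum₂_mul b a n
      + (a - b) * a ^ n * geom_sum_mul b n + (b - a) * mul_pow a b n)
  rw [key]
  refine mul_nonneg (by positivity) (sum_nonneg fun i _ => mul_nonneg (by positivity) ?_)
  exact sub_nonneg.2 (pow_le_pow_of_le_one (by simp [a, hl1]) (by simp [a, hl0]) (by omega))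

theorem pmf_nonneg (hl0 : 0 ≤ l) (hl1 : l ≤ 1) (hm0 : 0 ≤ m) (hm1 : m ≤ 1) (n : ℕ) :
    0 ≤ pmf l m n := by
  have hD : 0 ≤ l * (1 - m) + m := by nlinarith
  have h := mul_nonneg (div_nonneg hD (sq_nonneg (l - m)))
    (sub_mul_bracket_nonneg hl0 hl1 hm0 hm1 n)
  rcases eq_or_ne (l - m) 0 with hlm | hlm
  · simp [pmf, hlm]
  · calc 0 ≤ (l * (1 - m) + m) / (l - m) ^ 2 * ((l - m) * bracket l m n) := h
      _ = pmf l m n := by unfold pmf; field_simp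

theorem hasSum_pmf (hl0 : 0 < l) (hl1 : l < 1) (hm0 : 0 < m) (hm1 : m < 1) (hne : l ≠ m) :
    HasSum (pmf l m) 1 := by
  have hr : (1 - l) * (1 - m) < 1 := by nlinarith
  have h := ((((hasSum_geometric_of_lt_one (by positivity) hr).mul_left (l - m)).sub
    ((hasSum_geometric_of_lt_one (r := 1 - l) (by linarith) (by linarith)).mul_left l)).add
    ((hasSum_geometric_of_lt_one (r := 1 - m) (by linarith) (by linarith)).mul_left m)).mul_left
    ((l * (1 - m) + m) / (l - m))
  convert h using 1
  · rfl
  · rfl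
  have hD : l * (1 - m) + m ≠ 0 := by nlinarith
  have hlm : l - m ≠ 0 := sub_ne_zero.2 hne
  rw [show 1 - (1 - l) * (1 - m) = l * (1 - m) + m by ring, sub_sub_cancel, sub_sub_cancel,
    mul_inv_cancel₀ hl0.ne', mul_inv_cancel₀ hm0.ne']
  field_simp
  ring

end PAoI

/-- The stationary pmf of the PAoI for the preemptive LCFS Geo/Geo/1 queue,
`P_A(x) = ((λ(1−μ)+μ)/(λ−μ))[(λ−μ)((1−λ)(1−μ))^{x−1} − λ(1−λ)^{x−1} + μ(1−μ)^{x−1}]`,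
is nonnegative and sums to 1 over `x ∈ {1,2,...}`. -/
theorem lcfs_paoi_pmf (l m : ℝ) (hl0 : 0 < l) (hl1 : l < 1) (hm0 : 0 < m) (hm1 : m < 1)
    (hne : l ≠ m) :
    (∀ x : ℕ, 1 ≤ x →
      0 ≤ (l * (1 - m) + m) / (l - m) *
        ((l - m) * ((1 - l) * (1 - m)) ^ (x - 1) - l * (1 - l) ^ (x - 1)
          + m * (1 - m) ^ (x - 1))) ∧
    (∑' x : ℕ, (if x = 0 then (0 : ℝ) else (l * (1 - m) + m) / (l - m) *
        ((l - m) * ((1 - l) * (1 - m)) ^ (x - 1) - l * (1 - l) ^ (x - 1)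
          + m * (1 - m) ^ (x - 1)))) = 1 :=
  ⟨fun x _ => PAoI.pmf_nonneg hl0.le hl1.le hm0.le hm1.le (x - 1),
    (hasSum_ite_zero_pred (PAoI.hasSum_pmf hl0 hl1 hm0 hm1 hne)).tsum_eq⟩
end

section
/- For λ, μ ∈ (0,1), λ ≠ μ, the mean of the pmf P_A(x) = ((λ(1−μ)+μ)/(λ−μ))[(λ−μ)((1−λ)(1−μ))^{x−1} − λ(1−λ)^{x−1} + μ(1−μ)^{x−1}] over x ∈ {1,2,...} equals (λ²(1−μ)² + λμ(3−2μ) + μ²)/(λμ(λ(1−μ)+μ)). -/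
theorem hasSum_coe_mul_pow_pred {𝕜 : Type*} [NormedDivisionRing 𝕜] [CompleteSpace 𝕜] {r : 𝕜}
    (hr : ‖r‖ < 1) : HasSum (fun n : ℕ => (n : 𝕜) * r ^ (n - 1)) (1 / (1 - r) ^ 2) := by
  rw [← hasSum_nat_add_iff' 1]
  simpa using hasSum_choose_mul_geometric_of_norm_lt_one 1 hr

theorem Real.norm_one_sub_lt_one {x : ℝ} (h0 : 0 < x) (h1 : x < 1) : ‖1 - x‖ < 1 := by
  rw [Real.norm_eq_abs, abs_lt]
  constructor <;> linarith

/-- The mean of the preemptive LCFS Geo/Geo/1 PAoI pmf equals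
`(λ²(1−μ)² + λμ(3−2μ) + μ²)/(λμ(λ(1−μ)+μ))`. -/
theorem lcfs_paoi_mean (l m : ℝ) (hl0 : 0 < l) (hl1 : l < 1) (hm0 : 0 < m) (hm1 : m < 1)
    (hne : l ≠ m) :
    (∑' x : ℕ, (x : ℝ) * (if x = 0 then (0 : ℝ) else (l * (1 - m) + m) / (l - m) *
        ((l - m) * ((1 - l) * (1 - m)) ^ (x - 1) - l * (1 - l) ^ (x - 1)
          + m * (1 - m) ^ (x - 1)))) =
      (l ^ 2 * (1 - m) ^ 2 + l * m * (3 - 2 * m) + m ^ 2) / (l * m * (l * (1 - m) + m)) := by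
  set c := (l * (1 - m) + m) / (l - m)
  have hl := Real.norm_one_sub_lt_one hl0 hl1
  have hm := Real.norm_one_sub_lt_one hm0 hm1
  have hprod : ‖(1 - l) * (1 - m)‖ < 1 := by
    rw [norm_mul]
    exact mul_lt_one_of_nonneg_of_lt_one_left (norm_nonneg _) hl hm.le
  -- the `x = 0` term vanishes anyway, so the pmf is a combination of three series `∑ x r^(x-1)`
  have hsum := (((hasSum_coe_mul_pow_pred hprod).mul_left (c * (l - m))).sub
    ((hasSum_coe_mul_pow_pred hl).mul_left (c * l))).add
    ((hasSum_coe_mul_pow_pred hm).mul_left (c * m))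
  rw [(hsum.congr_fun fun x => ?summand).tsum_eq]
  case summand =>
    rcases eq_or_ne x 0 with rfl | hx
    · simp
    · rw [if_neg hx]; ring
  have hd : l * (1 - m) + m ≠ 0 := by nlinarith
  have hlm : l - m ≠ 0 := sub_ne_zero.mpr hne
  rw [show 1 - (1 - l) * (1 - m) = l * (1 - m) + m by ring, sub_sub_cancel, sub_sub_cancel]
  simp only [c]
  field_simp
  ring
end
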